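/- arXiv:0903.0563 — 7 statements merged into one kernel-verified Lean document; each statement's English description precedes it below -/
import Mathlib

section
/- Let $H$ be a self-adjoint operator with orthonormal basis of eigenvectors $\phi_j$ and eigenvalues $\lambda_j$, and let $G$ be a bounded operator. Then for any eigenvector $\phi_j$ and any real $z$: $\tfrac12(z-\lambda_j)^2\big(\langle[G^*,[H,G]]\phi_j,\phi_j\rangle+\langle[G,[H,G^*]]\phi_j,\phi_j\rangle\big)-(z-\lambda_j)\big(\|[H,G]\phi_j\|^2+\|[H,G^*]\phi_j\|^2\big)=\sum_k(z-\lambda_j)(z-\lambda_k)(\lambda_k-\lambda_j)\big(|\langle G\phi_j,\phi_k\rangle|^2+|\langle G^*\phi_j,\phi_k\rangle|^2\big)$ (sum over the full orthonormal basis). -/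
/-!
In the eigenbasis the commutator `[H, A]` has matrix elements `(λₖ - λⱼ) ⟪φₖ, A φⱼ⟫`, so by
Parseval `‖[H, A] φⱼ‖² = ∑ₖ (λₖ - λⱼ)² |⟪A φⱼ, φₖ⟫|²`. Moving `A*` across the inner product gives
`⟪[A*, [H, A]] φⱼ, φⱼ⟫ = ⟪(H - λⱼ) A φⱼ, A φⱼ⟫ + ⟪(H - λⱼ) A* φⱼ, A* φⱼ⟫
  = ∑ₖ (λₖ - λⱼ) (|⟪A φⱼ, φₖ⟫|² + |⟪A* φⱼ, φₖ⟫|²)`,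
which is symmetric in `A ↔ A*`. The sum rule then holds term by term, because
`(z - λⱼ)² (λₖ - λⱼ) - (z - λⱼ) (λₖ - λⱼ)² = (z - λⱼ) (z - λₖ) (λₖ - λⱼ)`.
-/

open scoped InnerProductSpace ComplexConjugate

def opComm {R : Type*} [Ring R] (A B : R) : R := A * B - B * A

section

variable {𝕜 E : Type*} [RCLike 𝕜] [NormedAddCommGroup E] [InnerProductSpace 𝕜 E]

lemma opComm_apply (A B : E →ₗ[𝕜] E) (x : E) : opComm A B x = A (B x) - B (A x) := rfl

lemma inner_mul_inner_eq_norm_sq (x y : E) : ⟪x, y⟫_𝕜 * ⟪y, x⟫_𝕜 = (‖⟪x, y⟫_𝕜‖ : 𝕜) ^ 2 := by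
  rw [← inner_conj_symm y x, RCLike.mul_conj]

end

namespace OrthonormalBasis

variable {𝕜 E ι : Type*} [RCLike 𝕜] [NormedAddCommGroup E] [InnerProductSpace 𝕜 E] [Fintype ι]
  (b : OrthonormalBasis ι 𝕜 E) {H : E →ₗ[𝕜] E} {lam : ι → ℝ}

lemma inner_apply_right_of_eigen (heig : ∀ k, H (b k) = (lam k : 𝕜) • b k) (k : ι) (x : E) :
    ⟪b k, H x⟫_𝕜 = lam k * ⟪b k, x⟫_𝕜 := by
  conv_lhs => rw [← b.sum_repr' x]
  simp only [map_sum, map_smul, heig, smul_smul]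
  rw [b.orthonormal.inner_right_fintype, mul_comm]

lemma inner_apply_left_of_eigen (heig : ∀ k, H (b k) = (lam k : 𝕜) • b k) (x : E) (k : ι) :
    ⟪H x, b k⟫_𝕜 = lam k * ⟪x, b k⟫_𝕜 := by
  rw [← inner_conj_symm, b.inner_apply_right_of_eigen heig, map_mul, RCLike.conj_ofReal,
    inner_conj_symm]

lemma inner_opComm_apply_of_eigen (heig : ∀ k, H (b k) = (lam k : 𝕜) • b k) (A : E →ₗ[𝕜] E)
    (j k : ι) :
    ⟪b k, opComm H A (b j)⟫_𝕜 = (lam k - lam j : ℝ) * ⟪b k, A (b j)⟫_𝕜 := by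
  rw [opComm_apply, inner_sub_right, b.inner_apply_right_of_eigen heig, heig, map_smul,
    inner_smul_right]
  push_cast
  ring

lemma norm_opComm_apply_sq_of_eigen (heig : ∀ k, H (b k) = (lam k : 𝕜) • b k)
    (A : E →ₗ[𝕜] E) (j : ι) :
    ‖opComm H A (b j)‖ ^ 2 = ∑ k, (lam k - lam j) ^ 2 * ‖⟪A (b j), b k⟫_𝕜‖ ^ 2 := by
  rw [← b.sum_sq_norm_inner_right]
  refine Finset.sum_congr rfl fun k _ => ?_
  rw [b.inner_opComm_apply_of_eigen heig, norm_mul, RCLike.norm_ofReal, mul_pow, sq_abs,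
    norm_inner_symm]

lemma inner_sub_smul_self_of_eigen (heig : ∀ k, H (b k) = (lam k : 𝕜) • b k) (μ : ℝ) (v : E) :
    ⟪H v - (μ : 𝕜) • v, v⟫_𝕜 = ((∑ k, (lam k - μ) * ‖⟪v, b k⟫_𝕜‖ ^ 2 : ℝ) : 𝕜) := by
  rw [← b.sum_inner_mul_inner]
  push_cast
  refine Finset.sum_congr rfl fun k _ => ?_
  rw [inner_sub_left, inner_smul_left, b.inner_apply_left_of_eigen heig, RCLike.conj_ofReal,
    ← sub_mul, mul_assoc, inner_mul_inner_eq_norm_sq]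

variable [FiniteDimensional 𝕜 E]

lemma inner_opComm_adjoint_opComm_apply_of_eigen (heig : ∀ k, H (b k) = (lam k : 𝕜) • b k)
    (A : E →ₗ[𝕜] E) (j : ι) :
    ⟪opComm (LinearMap.adjoint A) (opComm H A) (b j), b j⟫_𝕜
      = ⟪H (A (b j)) - (lam j : 𝕜) • A (b j), A (b j)⟫_𝕜
        + ⟪H (LinearMap.adjoint A (b j)) - (lam j : 𝕜) • LinearMap.adjoint A (b j),
            LinearMap.adjoint A (b j)⟫_𝕜 := by
  set w := LinearMap.adjoint A (b j)
  have hv : opComm H A (b j) = H (A (b j)) - (lam j : 𝕜) • A (b j) := by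
    rw [opComm_apply, heig, map_smul]
  have hw : ⟪opComm H A w, b j⟫_𝕜 = -⟪H w - (lam j : 𝕜) • w, w⟫_𝕜 := by
    rw [opComm_apply, inner_sub_left, b.inner_apply_left_of_eigen heig,
      ← LinearMap.adjoint_inner_right A w, ← LinearMap.adjoint_inner_right A (H w),
      inner_sub_left, inner_smul_left, RCLike.conj_ofReal]
    ring
  rw [opComm_apply, inner_sub_left, LinearMap.adjoint_inner_left, hv, hw, sub_neg_eq_add]

lemma inner_opComm_adjoint_opComm_apply_eq_sum (heig : ∀ k, H (b k) = (lam k : 𝕜) • b k)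
    (A : E →ₗ[𝕜] E) (j : ι) :
    ⟪opComm (LinearMap.adjoint A) (opComm H A) (b j), b j⟫_𝕜
      = ((∑ k, (lam k - lam j) *
          (‖⟪A (b j), b k⟫_𝕜‖ ^ 2 + ‖⟪LinearMap.adjoint A (b j), b k⟫_𝕜‖ ^ 2) : ℝ) : 𝕜) := by
  simp only [b.inner_opComm_adjoint_opComm_apply_of_eigen heig,
    b.inner_sub_smul_self_of_eigen heig, mul_add, Finset.sum_add_distrib, RCLike.ofReal_add]

end OrthonormalBasis

theorem stmt_1_general (n : ℕ)
    (H G : EuclideanSpace ℂ (Fin n) →ₗ[ℂ] EuclideanSpace ℂ (Fin n))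
    (b : OrthonormalBasis (Fin n) ℂ (EuclideanSpace ℂ (Fin n)))
    (lam : Fin n → ℝ)
    (heig : ∀ k, H (b k) = (lam k : ℂ) • b k)
    (z : ℝ) (j : Fin n) :
    (1/2 : ℂ) * ((z : ℂ) - lam j)^2 *
        (⟪opComm (LinearMap.adjoint G) (opComm H G) (b j), b j⟫_ℂ
          + ⟪opComm G (opComm H (LinearMap.adjoint G)) (b j), b j⟫_ℂ)
      - ((z : ℂ) - lam j) *
        ((‖opComm H G (b j)‖^2 + ‖opComm H (LinearMap.adjoint G) (b j)‖^2 : ℝ) : ℂ)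
    = ∑ k, (((z - lam j) * (z - lam k) * (lam k - lam j) *
        (‖⟪G (b j), b k⟫_ℂ‖^2 + ‖⟪LinearMap.adjoint G (b j), b k⟫_ℂ‖^2) : ℝ) : ℂ) := by
  have hG := b.inner_opComm_adjoint_opComm_apply_eq_sum heig G j
  have hG' := b.inner_opComm_adjoint_opComm_apply_eq_sum heig (LinearMap.adjoint G) j
  rw [LinearMap.adjoint_adjoint] at hG'
  rw [hG, hG', b.norm_opComm_apply_sq_of_eigen heig, b.norm_opComm_apply_sq_of_eigen heig]
  simp only [RCLike.ofReal_eq_complex_ofReal]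
  push_cast
  simp only [Finset.mul_sum, ← Finset.sum_add_distrib, ← Finset.sum_sub_distrib]
  refine Finset.sum_congr rfl fun k _ => ?_
  ring

/-- sum rule for a single eigenvector.  `H` is self-adjoint with orthonormal
eigenbasis `b` and eigenvalues `lam`, `G` arbitrary.  For any `j` and real `z`:
`(1/2)(z-λⱼ)²(⟨[G*,[H,G]]φⱼ,φⱼ⟩+⟨[G,[H,G*]]φⱼ,φⱼ⟩) - (z-λⱼ)(‖[H,G]φⱼ‖²+‖[H,G*]φⱼ‖²)
  = ∑ₖ (z-λⱼ)(z-λₖ)(λₖ-λⱼ)(|⟨Gφⱼ,φₖ⟩|²+|⟨G*φⱼ,φₖ⟩|²)`. -/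
theorem stmt_1 (n : ℕ)
    (H G : EuclideanSpace ℂ (Fin n) →ₗ[ℂ] EuclideanSpace ℂ (Fin n))
    (hH : LinearMap.adjoint H = H)
    (b : OrthonormalBasis (Fin n) ℂ (EuclideanSpace ℂ (Fin n)))
    (lam : Fin n → ℝ)
    (heig : ∀ k, H (b k) = (lam k : ℂ) • b k)
    (z : ℝ) (j : Fin n) :
    (1/2 : ℂ) * ((z : ℂ) - lam j)^2 *
        (⟪opComm (LinearMap.adjoint G) (opComm H G) (b j), b j⟫_ℂ
          + ⟪opComm G (opComm H (LinearMap.adjoint G)) (b j), b j⟫_ℂ)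
      - ((z : ℂ) - lam j) *
        ((‖opComm H G (b j)‖^2 + ‖opComm H (LinearMap.adjoint G) (b j)‖^2 : ℝ) : ℂ)
    = ∑ k, (((z - lam j) * (z - lam k) * (lam k - lam j) *
        (‖⟪G (b j), b k⟫_ℂ‖^2 + ‖⟪LinearMap.adjoint G (b j), b k⟫_ℂ‖^2) : ℝ) : ℂ) :=
  stmt_1_general n H G b lam heig z j
end

section
/- Let $H$ be a self-adjoint matrix, $P$ a spectral projector of $H$, $G$ any matrix, and set $A=(1-P)GP$, $B=PG(1-P)$. Then $\mathrm{tr}\big(H^2(G^*[H,G]+G[H,G^*])P\big)-\mathrm{tr}\big(H([H,G^*][H,G]+[H,G][H,G^*])P\big)=\mathrm{tr}\big(HA^*H^2A-HAH^2A^*\big)+\mathrm{tr}\big(HBH^2B^*-HB^*H^2B\big)$. -/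
open scoped Matrix
open Matrix

namespace Matrix

variable {m R : Type*} [Fintype m] [DecidableEq m] [CommRing R]

def tracePairing (H X Y : Matrix m m R) : R :=
  trace (X * H ^ 2 * Y * H) - trace (X * H * Y * H ^ 2)

variable {H P Q : Matrix m m R}

theorem tracePairing_add_left (X X' Y : Matrix m m R) :
    tracePairing H (X + X') Y = tracePairing H X Y + tracePairing H X' Y := by
  simp only [tracePairing, add_mul, trace_add]; ring

theorem tracePairing_add_right (X Y Y' : Matrix m m R) :
    tracePairing H X (Y + Y') = tracePairing H X Y + tracePairing H X Y' := by
  simp only [tracePairing, mul_add, add_mul, trace_add]; ring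

theorem tracePairing_swap (X Y : Matrix m m R) :
    tracePairing H Y X = -tracePairing H X Y := by
  rw [tracePairing, tracePairing, mul_assoc (Y * H ^ 2), trace_mul_comm (Y * H ^ 2),
    mul_assoc (Y * H), trace_mul_comm (Y * H)]
  simp only [mul_assoc]
  ring

theorem trace_mul_sub_eq_tracePairing (X Y : Matrix m m R) :
    trace (H * X * H ^ 2 * Y - H * Y * H ^ 2 * X) = tracePairing H X Y := by
  rw [trace_sub, tracePairing, trace_mul_comm (H * Y * H ^ 2) X, mul_assoc H, mul_assoc H,
    trace_mul_comm H]
  simp only [mul_assoc]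

theorem tracePairing_mul_left_of_commute (hPH : Commute P H) (X Y : Matrix m m R) :
    tracePairing H (P * X) Y = tracePairing H X (Y * P) := by
  simp only [tracePairing, mul_assoc]
  rw [trace_mul_comm P, trace_mul_comm P]
  simp only [mul_assoc, hPH.eq, (hPH.pow_right 2).eq]

theorem tracePairing_mul_mul_eq_zero (hPH : Commute P H) (hPQ : P * Q = 0)
    (X Y : Matrix m m R) : tracePairing H (X * P) (Q * Y) = 0 := by
  have hk (k : ℕ) (Z : Matrix m m R) : P * (H ^ k * (Q * Z)) = 0 := by
    rw [← mul_assoc, (hPH.pow_right k).eq, mul_assoc, ← mul_assoc P, hPQ, zero_mul, mul_zero]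
  simp only [tracePairing, mul_assoc]
  rw [hk, ← pow_one H, hk]
  simp

theorem tracePairing_mul_proj_split (hP : IsIdempotentElem P) (hPH : Commute P H)
    (X Y : Matrix m m R) :
    tracePairing H (P * X) (Y * P)
      = tracePairing H (P * X * P) (P * Y * P)
        + tracePairing H (P * X * (1 - P)) ((1 - P) * Y * P) := by
  have hQH : Commute (1 - P) H := (Commute.one_left H).sub_left hPH
  have hPQ : P * (1 - P) = 0 := by rw [mul_sub, mul_one, hP.eq, sub_self]
  have hQP : (1 - P) * P = 0 := by rw [sub_mul, one_mul, hP.eq, sub_self]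
  have hX : P * X = P * X * P + P * X * (1 - P) := by rw [← mul_add, add_sub_cancel, mul_one]
  have hY : Y * P = P * Y * P + (1 - P) * Y * P := by
    rw [← add_mul, ← add_mul, add_sub_cancel, one_mul]
  conv_lhs => rw [hX, hY]
  rw [tracePairing_add_left, tracePairing_add_right, tracePairing_add_right,
    mul_assoc (1 - P) Y P, mul_assoc P Y P, tracePairing_mul_mul_eq_zero hPH hPQ,
    tracePairing_mul_mul_eq_zero hQH hQP]
  ring

theorem tracePairing_add_tracePairing_eq_offDiag (hP : IsIdempotentElem P) (hPH : Commute P H)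
    (G G' : Matrix m m R) :
    tracePairing H G' (G * P) + tracePairing H G (G' * P)
      = tracePairing H (P * G' * (1 - P)) ((1 - P) * G * P)
        + tracePairing H (P * G * (1 - P)) ((1 - P) * G' * P) := by
  have hP_left (X Y : Matrix m m R) :
      tracePairing H X (Y * P) = tracePairing H (P * X) (Y * P) := by
    rw [tracePairing_mul_left_of_commute hPH, mul_assoc, hP.eq]
  rw [hP_left G', hP_left G, tracePairing_mul_proj_split hP hPH,
    tracePairing_mul_proj_split hP hPH, tracePairing_swap (P * G' * P) (P * G * P)]
  ring

theorem trace_sub_trace_opComm_eq_tracePairing (hPH : Commute P H) (G G' : Matrix m m R) :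
    trace (H ^ 2 * (G' * opComm H G + G * opComm H G') * P)
      - trace (H * (opComm H G' * opComm H G + opComm H G * opComm H G') * P)
    = tracePairing H G' (G * P) + tracePairing H G (G' * P) := by
  -- Eight of the twelve terms cancel in pairs; the other four become the pairing once their
  -- leading `H` is cycled to the end.
  simp only [opComm, tracePairing, pow_two, mul_add, add_mul, mul_sub, sub_mul, mul_assoc,
    trace_add, trace_sub]
  simp only [trace_mul_comm H, mul_assoc, hPH.eq, (hPH.mul_right hPH).eq]
  ring

end Matrix

theorem stmt_3_general (n : ℕ) (H P G : Matrix (Fin n) (Fin n) ℂ)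
    (hPproj : P * P = P) (hPherm : Pᴴ = P) (hPH : P * H = H * P)
    (A B : Matrix (Fin n) (Fin n) ℂ)
    (hA : A = (1 - P) * G * P) (hB : B = P * G * (1 - P)) :
    trace (H^2 * (Gᴴ * opComm H G + G * opComm H Gᴴ) * P)
      - trace (H * (opComm H Gᴴ * opComm H G + opComm H G * opComm H Gᴴ) * P)
    = trace (H * Aᴴ * H^2 * A - H * A * H^2 * Aᴴ)
      + trace (H * B * H^2 * Bᴴ - H * Bᴴ * H^2 * B) := by
  have hA_conj : Aᴴ = P * Gᴴ * (1 - P) := by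
    simp only [hA, conjTranspose_mul, conjTranspose_sub, conjTranspose_one, hPherm, mul_assoc]
  have hB_conj : Bᴴ = (1 - P) * Gᴴ * P := by
    simp only [hB, conjTranspose_mul, conjTranspose_sub, conjTranspose_one, hPherm, mul_assoc]
  rw [trace_sub_trace_opComm_eq_tracePairing hPH, trace_mul_sub_eq_tracePairing,
    trace_mul_sub_eq_tracePairing, tracePairing_add_tracePairing_eq_offDiag hPproj hPH,
    hA_conj, hB_conj, hA, hB]

/-- the general trace identity.  `H` Hermitian, `P` an orthogonal projection
commuting with `H`, `G` arbitrary, `A = (1-P)GP`, `B = PG(1-P)`.  Then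
`tr(H²(G*[H,G]+G[H,G*])P) - tr(H([H,G*][H,G]+[H,G][H,G*])P)
  = tr(HA*H²A - HAH²A*) + tr(HBH²B* - HB*H²B)`. -/
theorem stmt_3 (n : ℕ) (H P G : Matrix (Fin n) (Fin n) ℂ)
    (hH : Hᴴ = H) (hPproj : P * P = P) (hPherm : Pᴴ = P) (hPH : P * H = H * P)
    (A B : Matrix (Fin n) (Fin n) ℂ)
    (hA : A = (1 - P) * G * P) (hB : B = P * G * (1 - P)) :
    trace (H^2 * (Gᴴ * opComm H G + G * opComm H Gᴴ) * P)
      - trace (H * (opComm H Gᴴ * opComm H G + opComm H G * opComm H Gᴴ) * P)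
    = trace (H * Aᴴ * H^2 * A - H * A * H^2 * Aᴴ)
      + trace (H * B * H^2 * Bᴴ - H * Bᴴ * H^2 * B) :=
  stmt_3_general n H P G hPproj hPherm hPH A B hA hB
end

section
/- Under the assumptions of the general trace identity (Hermitian $H$, spectral projector $P$ commuting with $H$, arbitrary $G$, $A=(1-P)GP$, $B=PG(1-P)$), one has $\mathrm{tr}\big((G^*[H,G]+G[H,G^*])P\big)=\mathrm{tr}\big((z-H)[A^*,A]\big)+\mathrm{tr}\big((z-H)[B,B^*]\big)$ for every real $z$. -/
open scoped Matrix
open Matrix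

/-!
Taking traces kills commutators, so the `z`-terms vanish and only `tr (H [·,·])` remains.
Since `P` and `Q = 1 - P` are idempotents commuting with `H`, cyclicity of the trace removes
the outer projections: `tr (H Q G P G* Q) = tr (H Q G P G*)`, etc. Expanding `Q = 1 - P`, both
sides become `tr (H G P G*) - tr (H P G* G) + tr (H G* P G) - tr (H P G G*)`.
-/

namespace Matrix

variable {m R : Type*} [Fintype m] [CommRing R]

theorem trace_opComm [DecidableEq m] (X Y : Matrix m m R) : trace (opComm X Y) = 0 := by
  rw [opComm, trace_sub, trace_mul_comm, sub_self]

theorem trace_smul_one_sub_mul_opComm [DecidableEq m] (c : R) (H X Y : Matrix m m R) :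
    trace ((c • 1 - H) * opComm X Y) = -trace (H * opComm X Y) := by
  rw [sub_mul, smul_mul_assoc, one_mul, trace_sub, trace_smul, trace_opComm, smul_zero, zero_sub]

theorem trace_mul_opComm_mul [DecidableEq m] (H G K P : Matrix m m R) :
    trace (K * opComm H G * P) = trace (H * (G * P * K)) - trace (H * (P * K * G)) := by
  rw [opComm, mul_sub, sub_mul, trace_sub]
  congr 1
  · rw [mul_assoc, trace_mul_comm K]
    simp only [mul_assoc]
  · rw [trace_mul_comm H, mul_assoc P, mul_assoc P, trace_mul_comm P]
    simp only [mul_assoc]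

theorem trace_mul_idempotent_sandwich {H E : Matrix m m R} (hE : IsIdempotentElem E)
    (hEH : Commute E H) (X : Matrix m m R) :
    trace (H * (E * X * E)) = trace (H * (E * X)) := by
  rw [← mul_assoc, trace_mul_comm, ← mul_assoc, ← mul_assoc, hEH.eq, mul_assoc H E E, hE.eq,
    mul_assoc]

theorem trace_mul_corner_mul_corner {H E F : Matrix m m R} (hE : IsIdempotentElem E)
    (hF : IsIdempotentElem F) (hFH : Commute F H) (G K : Matrix m m R) :
    trace (H * (F * G * E * (E * K * F))) = trace (H * (F * G * E * K)) := by
  have : F * G * E * (E * K * F) = F * (G * E * K) * F := by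
    rw [← mul_assoc, ← mul_assoc, mul_assoc (F * G) E E, hE.eq]
    simp only [mul_assoc]
  rw [this, trace_mul_idempotent_sandwich hF hFH]
  simp only [mul_assoc]

variable [StarRing R]

theorem conjTranspose_corner {E F : Matrix m m R} (hE : Eᴴ = E) (hF : Fᴴ = F)
    (G : Matrix m m R) : (F * G * E)ᴴ = E * Gᴴ * F := by
  rw [conjTranspose_mul, conjTranspose_mul, hE, hF, mul_assoc]

theorem trace_mul_opComm_eq_corners [DecidableEq m] {H P : Matrix m m R}
    (hP : IsIdempotentElem P) (hPherm : Pᴴ = P) (hPH : Commute P H) (G : Matrix m m R) :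
    trace ((Gᴴ * opComm H G + G * opComm H Gᴴ) * P)
      = -trace (H * opComm ((1 - P) * G * P)ᴴ ((1 - P) * G * P))
        - trace (H * opComm (P * G * (1 - P)) (P * G * (1 - P))ᴴ) := by
  have hQ : IsIdempotentElem (1 - P) := hP.one_sub
  have hQH : Commute (1 - P) H := (Commute.one_left H).sub_left hPH
  have hQherm : (1 - P)ᴴ = 1 - P := by rw [conjTranspose_sub, conjTranspose_one, hPherm]
  rw [add_mul, trace_add, trace_mul_opComm_mul, trace_mul_opComm_mul,
    conjTranspose_corner hPherm hQherm, conjTranspose_corner hQherm hPherm,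
    opComm, opComm, mul_sub H, mul_sub H, trace_sub, trace_sub,
    trace_mul_corner_mul_corner hQ hP hPH, trace_mul_corner_mul_corner hQ hP hPH,
    trace_mul_corner_mul_corner hP hQ hQH, trace_mul_corner_mul_corner hP hQ hQH]
  simp only [sub_mul, mul_sub, mul_one, one_mul, trace_sub]
  abel

end Matrix

theorem stmt_4_general (n : ℕ) (H P G : Matrix (Fin n) (Fin n) ℂ)
    (hPproj : P * P = P) (hPherm : Pᴴ = P) (hPH : P * H = H * P)
    (A B : Matrix (Fin n) (Fin n) ℂ)
    (hA : A = (1 - P) * G * P) (hB : B = P * G * (1 - P)) (z : ℝ) :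
    trace ((Gᴴ * opComm H G + G * opComm H Gᴴ) * P)
    = trace (((z : ℂ) • (1 : Matrix (Fin n) (Fin n) ℂ) - H) * opComm Aᴴ A)
      + trace (((z : ℂ) • (1 : Matrix (Fin n) (Fin n) ℂ) - H) * opComm B Bᴴ) := by
  rw [trace_smul_one_sub_mul_opComm, trace_smul_one_sub_mul_opComm, ← sub_eq_add_neg, hA, hB]
  exact trace_mul_opComm_eq_corners hPproj hPherm hPH G

/-- under the assumptions of the general trace identity,
`tr((G*[H,G]+G[H,G*])P) = tr((z-H)[A*,A]) + tr((z-H)[B,B*])` for every real `z`. -/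
theorem stmt_4 (n : ℕ) (H P G : Matrix (Fin n) (Fin n) ℂ)
    (hH : Hᴴ = H) (hPproj : P * P = P) (hPherm : Pᴴ = P) (hPH : P * H = H * P)
    (A B : Matrix (Fin n) (Fin n) ℂ)
    (hA : A = (1 - P) * G * P) (hB : B = P * G * (1 - P)) (z : ℝ) :
    trace ((Gᴴ * opComm H G + G * opComm H Gᴴ) * P)
    = trace (((z : ℂ) • (1 : Matrix (Fin n) (Fin n) ℂ) - H) * opComm Aᴴ A)
      + trace (((z : ℂ) • (1 : Matrix (Fin n) (Fin n) ℂ) - H) * opComm B Bᴴ) :=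
  stmt_4_general n H P G hPproj hPherm hPH A B hA hB z
end

section
/- Let $H$ be Hermitian, $P$ a spectral projector of $H$ with $HP\le\lambda P$ and $H(1-P)\ge\Lambda(1-P)$ for constants $\lambda<\Lambda$, and $G$ any matrix. Then for all $z\in[\lambda,\Lambda]$: $\mathrm{tr}\big((z-H)^2(G^*[H,G]+G[H,G^*])P\big)+\mathrm{tr}\big((z-H)([H,G^*][H,G]+[H,G][H,G^*])P\big)\le(z-\lambda)(z-\Lambda)\,\mathrm{tr}\big((G^*[H,G]+G[H,G^*])P\big)$. -/
open scoped Matrix ComplexOrder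
open Matrix

/-!
Put `K = z - H`, `α = z - λ ≥ 0` and `β = z - Λ ≤ 0`. In an eigenbasis of `H` adapted to `P`, with
`K = diag k`, the left side minus the right side is
`∑_{i ∈ P} ∑_j (|G_ji|² + |G_ij|²) (k_i - k_j) (k_i k_j - αβ)`.
The terms with `j ∈ P` cancel in pairs, and for `i ∈ P`, `j ∉ P` we have `k_i ≥ α ≥ 0 ≥ β ≥ k_j`,
so `k_i - k_j ≥ 0 ≥ k_i k_j - αβ`. The proof never diagonalises: for the last step it expands
`(a - b)(ab - αβ)` at `a = α + d`, `b = β - e` into traces `tr (X* e^q X d^p)` with `d, e ≥ 0`,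
each of which has nonnegative real part.
-/

namespace Matrix

variable {n : Type*} [Fintype n] {R : Type*} [CommRing R]

lemma opComm_eq_opComm_smul_one_sub [DecidableEq n] (c : R) (H X : Matrix n n R) :
    opComm H X = opComm X (c • 1 - H) := by
  simp only [opComm, mul_sub, sub_mul, smul_mul_assoc, mul_smul_comm, mul_one, one_mul]
  abel

lemma mul_mul_add_smul_one_sub [DecidableEq n] {K P Y : Matrix n n R} (hKP : Commute K P)
    (hY : Y * P = Y) (α : R) : Y * (K * P + α • (1 - P)) = Y * K := by
  rw [mul_add, mul_smul_comm, mul_sub, mul_one, hY, sub_self, smul_zero, add_zero, ← mul_assoc,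
    mul_assoc, hKP.eq, ← mul_assoc, hY]

lemma mul_one_sub_add_smul_mul [DecidableEq n] {K P Y : Matrix n n R} (hPY : P * Y = 0) (β : R) :
    (K * (1 - P) + β • P) * Y = K * Y := by
  rw [add_mul, smul_mul_assoc, hPY, smul_zero, add_zero, mul_assoc, sub_mul, one_mul, hPY, sub_zero]

section StarRing

variable [StarRing R]

lemma trace_conjTranspose_mul_mul_mul (B M N : Matrix n n R) :
    trace (Bᴴ * M * B * N) = trace (Bᴴᴴ * N * Bᴴ * M) := by
  rw [conjTranspose_conjTranspose, mul_assoc, trace_mul_comm, ← mul_assoc]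

lemma IsStarProjection.trace_conjTranspose_mul_mul_mul {P N : Matrix n n R}
    (hP : IsStarProjection P) (hN : Commute N P) (X M : Matrix n n R) :
    trace ((X * P)ᴴ * M * (X * P) * N) = trace (Xᴴ * M * X * N * P) := by
  have hPh : Pᴴ = P := hP.isSelfAdjoint
  calc trace ((X * P)ᴴ * M * (X * P) * N) = trace (P * (Xᴴ * M * X * N * P)) := by
        simp only [conjTranspose_mul, hPh, mul_assoc, ← hN.eq]
    _ = trace (Xᴴ * M * X * N * P) := by
        rw [trace_mul_comm, mul_assoc, hP.isIdempotentElem.eq]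

lemma IsStarProjection.add_conjTranspose_mul_eq {P : Matrix n n R} [DecidableEq n]
    (hP : IsStarProjection P) {f : Matrix n n R → R}
    (hf : ∀ Y, f Y = f (P * Y) + f ((1 - P) * Y)) (hf' : ∀ B, f B + f Bᴴ = 0)
    (X : Matrix n n R) :
    f (X * P) + f (Xᴴ * P) = f ((1 - P) * X * P) + f ((1 - P) * Xᴴ * P) := by
  have hPh : Pᴴ = P := hP.isSelfAdjoint
  have hdiag := hf' (P * X * P)
  simp only [conjTranspose_mul, hPh, mul_assoc] at hdiag
  rw [hf (X * P), hf (Xᴴ * P)]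
  simp only [mul_assoc] at *
  linear_combination hdiag

/-- In eigenbases `a = diag aᵢ`, `b = diag bⱼ` these forms are `∑ |X_ji|² (aᵢ - bⱼ)` and
`∑ |X_ji|² aᵢ bⱼ (aᵢ - bⱼ)`. -/
def linGapForm (a b X : Matrix n n R) : R := trace (Xᴴ * X * a) - trace (Xᴴ * b * X)

def cubicGapForm [DecidableEq n] (a b X : Matrix n n R) : R :=
  trace (Xᴴ * b * X * a ^ 2) - trace (Xᴴ * b ^ 2 * X * a)

lemma linGapForm_add_conjTranspose (a B : Matrix n n R) :
    linGapForm a a B + linGapForm a a Bᴴ = 0 := by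
  simp only [linGapForm, conjTranspose_conjTranspose, trace_mul_cycle B a Bᴴ,
    ← trace_mul_cycle Bᴴ a B]
  ring

variable [DecidableEq n]

lemma cubicGapForm_add_conjTranspose (a B : Matrix n n R) :
    cubicGapForm a a B + cubicGapForm a a Bᴴ = 0 := by
  simp only [cubicGapForm, trace_conjTranspose_mul_mul_mul B a,
    trace_conjTranspose_mul_mul_mul B (a ^ 2)]
  ring

lemma IsStarProjection.conjTranspose_mul_mul_eq_add {P M : Matrix n n R}
    (hP : IsStarProjection P) (hM : Commute M P) (Y : Matrix n n R) :
    Yᴴ * M * Y = (P * Y)ᴴ * M * (P * Y) + ((1 - P) * Y)ᴴ * M * ((1 - P) * Y) := by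
  have hPP : P * P = P := hP.isIdempotentElem
  have hPh : Pᴴ = P := hP.isSelfAdjoint
  have hM' : M = P * M * P + (1 - P) * M * (1 - P) := by
    simp only [mul_sub, sub_mul, mul_one, one_mul, ← hM.eq, mul_assoc, hPP]
    abel
  simp only [conjTranspose_mul, conjTranspose_sub, conjTranspose_one, hPh]
  conv_lhs => rw [hM']
  simp only [mul_add, add_mul, mul_assoc]

lemma linGapForm_eq_add {P : Matrix n n R} (hP : IsStarProjection P) {b : Matrix n n R}
    (hb : Commute b P) (a Y : Matrix n n R) :
    linGapForm a b Y = linGapForm a b (P * Y) + linGapForm a b ((1 - P) * Y) := by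
  have h1 := hP.conjTranspose_mul_mul_eq_add (Commute.one_left P) Y
  simp only [mul_one] at h1
  simp only [linGapForm, h1, hP.conjTranspose_mul_mul_eq_add hb Y, add_mul, trace_add]
  ring

lemma cubicGapForm_eq_add {P : Matrix n n R} (hP : IsStarProjection P) {b : Matrix n n R}
    (hb : Commute b P) (a Y : Matrix n n R) :
    cubicGapForm a b Y = cubicGapForm a b (P * Y) + cubicGapForm a b ((1 - P) * Y) := by
  simp only [cubicGapForm, hP.conjTranspose_mul_mul_eq_add hb Y,
    hP.conjTranspose_mul_mul_eq_add (hb.pow_left 2) Y, add_mul, trace_add]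
  ring

lemma linGapForm_compl_eq {K P X : Matrix n n R} (hKP : Commute K P) (hXP : X * P = X)
    (hPX : P * X = 0) (α β : R) :
    linGapForm (K * P + α • (1 - P)) (K * (1 - P) + β • P) X = linGapForm K K X := by
  simp only [linGapForm, mul_assoc, mul_mul_add_smul_one_sub hKP hXP,
    mul_one_sub_add_smul_mul hPX]

lemma cubicGapForm_compl_eq {K P X : Matrix n n R} (hKP : Commute K P) (hXP : X * P = X)
    (hPX : P * X = 0) (α β : R) :
    cubicGapForm (K * P + α • (1 - P)) (K * (1 - P) + β • P) X = cubicGapForm K K X := by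
  have hXKP : X * K * P = X * K := by rw [mul_assoc, hKP.eq, ← mul_assoc, hXP]
  have hPKX : P * (K * X) = 0 := by rw [← mul_assoc, ← hKP.eq, mul_assoc, hPX, mul_zero]
  simp only [cubicGapForm, sq, mul_assoc, mul_one_sub_add_smul_mul hPX,
    mul_one_sub_add_smul_mul hPKX]
  simp only [← mul_assoc, mul_mul_add_smul_one_sub hKP hXP, mul_mul_add_smul_one_sub hKP hXKP]

variable {H P : Matrix n n R}

lemma trace_mul_opComm_mul_eq_linGapForm (hP : IsStarProjection P) (hHP : Commute H P) (c : R)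
    (X : Matrix n n R) :
    trace (Xᴴ * opComm H X * P) = linGapForm (c • 1 - H) (c • 1 - H) (X * P) := by
  set K := c • 1 - H
  have hKP : Commute K P := ((Commute.one_left P).smul_left c).sub_left hHP
  have h1 := hP.trace_conjTranspose_mul_mul_mul hKP X 1
  have h2 := hP.trace_conjTranspose_mul_mul_mul (Commute.one_left P) X K
  simp only [mul_one] at h1 h2
  have hA : opComm H X = X * K - K * X := opComm_eq_opComm_smul_one_sub c H X
  rw [linGapForm, h1, h2, hA]
  simp only [mul_sub, sub_mul, trace_sub, mul_assoc]

lemma trace_sq_mul_opComm_mul_add_eq_cubicGapForm (hP : IsStarProjection P) (hHP : Commute H P)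
    (c : R) (X : Matrix n n R) :
    trace ((c • 1 - H) ^ 2 * (Xᴴ * opComm H X) * P)
      + trace ((c • 1 - H) * (opComm H Xᴴ * opComm H X) * P)
      = cubicGapForm (c • 1 - H) (c • 1 - H) (X * P) := by
  set K := c • 1 - H
  have hKP : Commute K P := ((Commute.one_left P).smul_left c).sub_left hHP
  have hrot : ∀ A, trace (K * A * P) = trace (A * K * P) := fun A => by
    rw [mul_assoc, trace_mul_comm, mul_assoc, ← hKP.eq, ← mul_assoc]
  rw [cubicGapForm, hP.trace_conjTranspose_mul_mul_mul (hKP.pow_left 2),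
    hP.trace_conjTranspose_mul_mul_mul hKP, opComm_eq_opComm_smul_one_sub c H X,
    opComm_eq_opComm_smul_one_sub c H Xᴴ]
  have hexp : trace (K ^ 2 * (Xᴴ * opComm X K) * P)
      + trace (K * (opComm Xᴴ K * opComm X K) * P)
      = trace (K * (Xᴴ * K * X * K) * P) - trace (K * (Xᴴ * K ^ 2 * X) * P) := by
    simp only [opComm, sq, mul_sub, sub_mul, trace_sub, mul_assoc]
    ring
  rw [hexp, hrot, hrot]
  simp only [sq, mul_assoc]

end StarRing

section RCLike

variable {𝕜 : Type*} [RCLike 𝕜] [DecidableEq n]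

lemma PosSemidef.re_trace_mul_nonneg {A B : Matrix n n 𝕜} (hA : A.PosSemidef)
    (hB : B.PosSemidef) : 0 ≤ RCLike.re (trace (A * B)) := by
  open scoped MatrixOrder in
  obtain ⟨C, rfl⟩ := CStarAlgebra.nonneg_iff_eq_star_mul_self.mp hB.nonneg
  rw [star_eq_conjTranspose, ← mul_assoc, trace_mul_comm, ← mul_assoc]
  exact (RCLike.nonneg_iff.mp (hA.mul_mul_conjTranspose_same C).trace_nonneg).1

lemma re_cubicGapForm_le {a b X : Matrix n n 𝕜} {α β : ℝ} (hα : 0 ≤ α) (hβ : β ≤ 0)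
    (ha : (a - (α : 𝕜) • 1).PosSemidef) (hb : ((β : 𝕜) • 1 - b).PosSemidef) :
    RCLike.re (cubicGapForm a b X) ≤ α * β * RCLike.re (linGapForm a b X) := by
  obtain ⟨d, hd, rfl⟩ : ∃ d, d.PosSemidef ∧ a = (α : 𝕜) • 1 + d := ⟨_, ha, by abel⟩
  obtain ⟨e, he, rfl⟩ : ∃ e, e.PosSemidef ∧ b = (β : 𝕜) • 1 - e := ⟨_, hb, by abel⟩
  have h {M N : Matrix n n 𝕜} (hM : M.PosSemidef) (hN : N.PosSemidef) :
      0 ≤ RCLike.re (trace (Xᴴ * M * X * N)) :=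
    (hM.conjTranspose_mul_mul_same X).re_trace_mul_nonneg hN
  have t1 := h .one hd
  have t2 := h .one (hd.pow 2)
  have t3 := h he .one
  have t4 := h he hd
  have t5 := h he (hd.pow 2)
  have t6 := h (he.pow 2) .one
  have t7 := h (he.pow 2) hd
  simp only [cubicGapForm, linGapForm, sq, mul_add, add_mul, mul_sub, sub_mul, smul_mul_assoc,
    mul_smul_comm, smul_add, smul_sub, smul_smul, Matrix.mul_one, Matrix.one_mul, trace_add,
    trace_sub, trace_smul, smul_eq_mul, map_add, map_sub, RCLike.re_ofReal_mul,
    ← RCLike.ofReal_mul, mul_assoc] at *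
  -- `(a - b)(ab - αβ) = -(α - β + d + e)(-β d + α e + d e)` for `a = α + d`, `b = β - e`
  have hγ : 0 ≤ -β := by linarith
  have hδ : 0 ≤ α - β := by linarith
  linarith [mul_nonneg (mul_nonneg hγ hδ) t1, mul_nonneg hγ t2, mul_nonneg (mul_nonneg hα hδ) t3,
    mul_nonneg (add_nonneg (add_nonneg hδ hα) hγ) t4, mul_nonneg hα t6]

/-- The gap hypotheses say that `K P + α (1 - P) ≥ α` and `K (1 - P) + β P ≤ β`, for
`K = z - H`, `α = z - λ` and `β = z - Λ`. -/
lemma re_cubicGapForm_le_of_gap {H P : Matrix n n 𝕜} (hP : IsIdempotentElem P)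
    (hHP : Commute H P) {lam Lam z : ℝ} (hbelow : ((lam : 𝕜) • P - H * P).PosSemidef)
    (habove : (H * (1 - P) - (Lam : 𝕜) • (1 - P)).PosSemidef) (hz : z ∈ Set.Icc lam Lam)
    (X : Matrix n n 𝕜) :
    RCLike.re (cubicGapForm ((z : 𝕜) • 1 - H) ((z : 𝕜) • 1 - H) ((1 - P) * X * P))
      ≤ (z - lam) * (z - Lam)
        * RCLike.re (linGapForm ((z : 𝕜) • 1 - H) ((z : 𝕜) • 1 - H) ((1 - P) * X * P)) := by
  set K := (z : 𝕜) • 1 - H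
  have hKP : Commute K P := ((Commute.one_left P).smul_left _).sub_left hHP
  have hXP : (1 - P) * X * P * P = (1 - P) * X * P := by rw [mul_assoc _ P P, hP.eq]
  have hPX : P * ((1 - P) * X * P) = 0 := by
    rw [← mul_assoc, ← mul_assoc, mul_sub, mul_one, hP.eq, sub_self, zero_mul, zero_mul]
  rw [← cubicGapForm_compl_eq hKP hXP hPX ((z - lam : ℝ) : 𝕜) ((z - Lam : ℝ) : 𝕜),
    ← linGapForm_compl_eq hKP hXP hPX ((z - lam : ℝ) : 𝕜) ((z - Lam : ℝ) : 𝕜)]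
  refine re_cubicGapForm_le (by linarith [hz.1]) (by linarith [hz.2]) ?_ ?_
  · convert hbelow using 1
    simp only [K, RCLike.ofReal_sub, sub_mul, smul_mul_assoc, one_mul, smul_sub, sub_smul]
    abel
  · convert habove using 1
    simp only [K, RCLike.ofReal_sub, sub_mul, smul_mul_assoc, one_mul, smul_sub, sub_smul]
    abel

end RCLike

end Matrix

theorem stmt_5_general (n : ℕ) (H P G : Matrix (Fin n) (Fin n) ℂ)
    (hPproj : P * P = P) (hPherm : Pᴴ = P) (hPH : P * H = H * P)
    (lam Lam : ℝ)
    (hbelow : ((lam : ℂ) • P - H * P).PosSemidef)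
    (habove : (H * (1 - P) - (Lam : ℂ) • (1 - P)).PosSemidef)
    (z : ℝ) (hz : z ∈ Set.Icc lam Lam) :
    (trace (((z : ℂ) • (1 : Matrix (Fin n) (Fin n) ℂ) - H)^2
        * (Gᴴ * opComm H G + G * opComm H Gᴴ) * P)).re
      + (trace (((z : ℂ) • (1 : Matrix (Fin n) (Fin n) ℂ) - H)
        * (opComm H Gᴴ * opComm H G + opComm H G * opComm H Gᴴ) * P)).re
    ≤ (z - lam) * (z - Lam) * (trace ((Gᴴ * opComm H G + G * opComm H Gᴴ) * P)).re := by
  have hP : IsStarProjection P := ⟨hPproj, hPherm⟩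
  have hHP : Commute H P := hPH.symm
  set K := (z : ℂ) • (1 : Matrix (Fin n) (Fin n) ℂ) - H
  have hKP : Commute K P := ((Commute.one_left P).smul_left _).sub_left hHP
  have hcub := trace_sq_mul_opComm_mul_add_eq_cubicGapForm hP hHP (z : ℂ) G
  have hcub' := trace_sq_mul_opComm_mul_add_eq_cubicGapForm hP hHP (z : ℂ) Gᴴ
  have hlin := trace_mul_opComm_mul_eq_linGapForm hP hHP (z : ℂ) G
  have hlin' := trace_mul_opComm_mul_eq_linGapForm hP hHP (z : ℂ) Gᴴ
  rw [conjTranspose_conjTranspose] at hcub' hlin'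
  have hL : trace (K ^ 2 * (Gᴴ * opComm H G + G * opComm H Gᴴ) * P)
      + trace (K * (opComm H Gᴴ * opComm H G + opComm H G * opComm H Gᴴ) * P)
      = cubicGapForm K K ((1 - P) * G * P) + cubicGapForm K K ((1 - P) * Gᴴ * P) := by
    rw [← hP.add_conjTranspose_mul_eq (cubicGapForm_eq_add hP hKP K)
      (cubicGapForm_add_conjTranspose K), ← hcub, ← hcub']
    simp only [mul_add, add_mul, trace_add]
    ring
  have hR : trace ((Gᴴ * opComm H G + G * opComm H Gᴴ) * P)
      = linGapForm K K ((1 - P) * G * P) + linGapForm K K ((1 - P) * Gᴴ * P) := by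
    rw [← hP.add_conjTranspose_mul_eq (linGapForm_eq_add hP hKP K)
      (linGapForm_add_conjTranspose K), ← hlin, ← hlin', add_mul, trace_add]
  rw [← Complex.add_re, hL, hR, Complex.add_re, Complex.add_re, mul_add]
  exact add_le_add (re_cubicGapForm_le_of_gap hPproj hHP hbelow habove hz G)
    (re_cubicGapForm_le_of_gap hPproj hHP hbelow habove hz Gᴴ)

/-- the gap inequality.  `H` Hermitian, `P` an orthogonal projection commuting
with `H`, with `HP ≤ λP` and `H(1-P) ≥ Λ(1-P)` for constants `λ < Λ`; `G` arbitrary.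
For all `z ∈ [λ, Λ]`:
`tr((z-H)²(G*[H,G]+G[H,G*])P) + tr((z-H)([H,G*][H,G]+[H,G][H,G*])P)
  ≤ (z-λ)(z-Λ) tr((G*[H,G]+G[H,G*])P)`. -/
theorem stmt_5 (n : ℕ) (H P G : Matrix (Fin n) (Fin n) ℂ)
    (hH : Hᴴ = H) (hPproj : P * P = P) (hPherm : Pᴴ = P) (hPH : P * H = H * P)
    (lam Lam : ℝ) (hgap : lam < Lam)
    (hbelow : ((lam : ℂ) • P - H * P).PosSemidef)
    (habove : (H * (1 - P) - (Lam : ℂ) • (1 - P)).PosSemidef)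
    (z : ℝ) (hz : z ∈ Set.Icc lam Lam) :
    (trace (((z : ℂ) • (1 : Matrix (Fin n) (Fin n) ℂ) - H)^2
        * (Gᴴ * opComm H G + G * opComm H Gᴴ) * P)).re
      + (trace (((z : ℂ) • (1 : Matrix (Fin n) (Fin n) ℂ) - H)
        * (opComm H Gᴴ * opComm H G + opComm H G * opComm H Gᴴ) * P)).re
    ≤ (z - lam) * (z - Lam) * (trace ((Gᴴ * opComm H G + G * opComm H Gᴴ) * P)).re :=
  stmt_5_general n H P G hPproj hPherm hPH lam Lam hbelow habove z hz
end

section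
/- Let $0\le\lambda_1\le\dots\le\lambda_N\le z$ be reals with $\overline{\lambda_N}=\tfrac1N\sum_j\lambda_j$, $\overline{\lambda_N^2}=\tfrac1N\sum_j\lambda_j^2$, and suppose the quadratic inequality $z^2-\big((2+\tfrac4d)\overline{\lambda_N}+\tau\big)z+(1+\tfrac4d)\overline{\lambda_N^2}+\tau\overline{\lambda_N}\le0$ holds for $z=\lambda_{N+1}$ where $\lambda_{N+1}\ge\lambda_N$ and $\tau\ge0$. Then $\lambda_{N+1}\le(1+\tfrac4d)\overline{\lambda_N}+\tau$. -/
/-!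
Since the mean square dominates the squared mean, the quadratic inequality still holds with
`λ̄_N²` in place of `λ̄²_N`, and then its left-hand side factors as
`(z - λ̄_N) (z - (1 + 4/d) λ̄_N - τ)`. As `λ̄_N ≥ 0` and `τ ≥ 0`, the second root is the larger one,
so `z` lies below it.
-/

open Finset

lemma le_of_quadratic_nonpos_of_sq_le {z m m₂ a τ : ℝ} (ha : 0 ≤ a) (hτ : 0 ≤ τ) (hm : 0 ≤ m)
    (hm₂ : m ^ 2 ≤ m₂)
    (h : z ^ 2 - ((2 + a) * m + τ) * z + (1 + a) * m₂ + τ * m ≤ 0) :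
    z ≤ (1 + a) * m + τ := by
  have hfactor : (z - m) * (z - ((1 + a) * m + τ)) ≤ 0 := by
    nlinarith [mul_le_mul_of_nonneg_left hm₂ (by linarith : (0 : ℝ) ≤ 1 + a)]
  by_contra! hlt
  have hm_lt : m < z := by nlinarith [mul_nonneg ha hm]
  nlinarith [mul_pos (sub_pos.mpr hm_lt) (sub_pos.mpr hlt)]

theorem stmt_10_general (d N : ℕ) (τ : ℝ) (hτ : 0 ≤ τ)
    (lam : ℕ → ℝ) (hnonneg : 0 ≤ lam 1)
    (hmono : ∀ i j, 1 ≤ i → i ≤ j → j ≤ N + 1 → lam i ≤ lam j)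
    (lamBar lamSqBar : ℝ)
    (hBar : lamBar = (∑ j ∈ Icc 1 N, lam j) / N)
    (hSqBar : lamSqBar = (∑ j ∈ Icc 1 N, (lam j)^2) / N)
    (hquad : (lam (N+1))^2 - ((2 + 4/(d : ℝ)) * lamBar + τ) * lam (N+1)
        + (1 + 4/(d : ℝ)) * lamSqBar + τ * lamBar ≤ 0) :
    lam (N+1) ≤ (1 + 4/(d : ℝ)) * lamBar + τ := by
  have hcard : (#(Icc 1 N) : ℝ) = N := by simp
  have hBar_nonneg : 0 ≤ lamBar := by
    rw [hBar]
    refine div_nonneg (sum_nonneg fun j hj => ?_) N.cast_nonneg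
    obtain ⟨h1j, hjN⟩ := mem_Icc.mp hj
    exact hnonneg.trans (hmono 1 j le_rfl h1j (by omega))
  have hsq : lamBar ^ 2 ≤ lamSqBar := by
    rw [hBar, hSqBar, ← hcard]
    exact sum_div_card_sq_le_sum_sq_div_card
  exact le_of_quadratic_nonpos_of_sq_le (by positivity) hτ hBar_nonneg hsq hquad

/-- if `0 ≤ λ₁ ≤ … ≤ λ_N ≤ λ_{N+1}`, `τ ≥ 0`, and the quadratic inequality
`z² - ((2+4/d)λ̄_N + τ) z + (1+4/d)λ̄²_N + τ λ̄_N ≤ 0` holds at `z = λ_{N+1}`, then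
`λ_{N+1} ≤ (1+4/d) λ̄_N + τ`. -/
theorem stmt_10 (d N : ℕ) (hd : 0 < d) (hN : 1 ≤ N) (τ : ℝ) (hτ : 0 ≤ τ)
    (lam : ℕ → ℝ) (hnonneg : 0 ≤ lam 1)
    (hmono : ∀ i j, 1 ≤ i → i ≤ j → j ≤ N + 1 → lam i ≤ lam j)
    (lamBar lamSqBar : ℝ)
    (hBar : lamBar = (∑ j ∈ Icc 1 N, lam j) / N)
    (hSqBar : lamSqBar = (∑ j ∈ Icc 1 N, (lam j)^2) / N)
    (hquad : (lam (N+1))^2 - ((2 + 4/(d : ℝ)) * lamBar + τ) * lam (N+1)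
        + (1 + 4/(d : ℝ)) * lamSqBar + τ * lamBar ≤ 0) :
    lam (N+1) ≤ (1 + 4/(d : ℝ)) * lamBar + τ :=
  stmt_10_general d N τ hτ lam hnonneg hmono lamBar lamSqBar hBar hSqBar hquad
end

section
/- For all $x\ge0$, the Riesz mean $R_2(x)=\sum_{m^2+n^2\le x,\ (m,n)\in\mathbb{Z}^2}(x-(m^2+n^2))^2$ satisfies $R_2(x)\le\tfrac{\pi}{3}\big(x+\tfrac12\big)^3$. -/
/-!
Write `R₂(x) = ∑_{m,n} ((x - m² - n²)₊)²`. For a convex `φ`, Jensen's inequality on the unit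
interval centred at `n` gives `φ(c - 1/12 - n²) ≤ ∫_{n-1/2}^{n+1/2} φ(c - t²) dt`, since
`c - t²` has mean `c - 1/12 - n²` there. Applied to `φ(s) = (s₊)²` this replaces the sum over
`n` by `∫_ℝ ((x - m² + 1/12 - t²)₊)² dt = (16/15) ((x + 1/12 - m²)₊)^{5/2}`, and applied again to
`φ(s) = (s₊)^{5/2}` it replaces the sum over `m` by
`(16/15) ∫_ℝ ((x + 1/6 - t²)₊)^{5/2} dt = (π/3) (x + 1/6)³`. Both integrals are computed with
`t = √c sin θ`, which turns `∫_ℝ ((c - t²)₊)^p dt` into `c^{p+1/2} ∫_{-π/2}^{π/2} cos^{2p+1} θ dθ`.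
-/

open Real

/-- The Riesz mean `R₂(x) = ∑_{m²+n² ≤ x} (x - (m²+n²))²`. -/
noncomputable def rieszMean2 (x : ℝ) : ℝ :=
  ∑' p : {p : ℤ × ℤ // ((p.1 : ℝ)^2 + (p.2 : ℝ)^2) ≤ x},
    (x - (((p : ℤ × ℤ).1 : ℝ)^2 + ((p : ℤ × ℤ).2 : ℝ)^2))^2

open Set MeasureTheory intervalIntegral

lemma convexOn_posPart_rpow {p : ℝ} (hp : 1 ≤ p) : ConvexOn ℝ univ fun s : ℝ => s⁺ ^ p := by
  have hrange : (posPart : ℝ → ℝ) '' univ = Ici 0 := by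
    ext s
    refine ⟨?_, fun hs => ⟨s, mem_univ s, posPart_of_nonneg hs⟩⟩
    rintro ⟨t, -, rfl⟩
    exact posPart_nonneg t
  have hpos : ConvexOn ℝ univ (posPart : ℝ → ℝ) :=
    (convexOn_id convex_univ).sup (convexOn_const 0 convex_univ)
  refine ConvexOn.comp (g := fun s : ℝ => s ^ p) ?_ hpos ?_ <;> rw [hrange]
  · exact convexOn_rpow hp
  · exact fun a ha b _ hab => rpow_le_rpow ha hab (by linarith)

lemma continuous_posPart_rpow {p : ℝ} (hp : 0 ≤ p) : Continuous fun s : ℝ => s⁺ ^ p :=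
  continuous_posPart.rpow_const fun _ => Or.inr hp

lemma ConvexOn.map_intervalIntegral_le {φ f : ℝ → ℝ} (hφ : ConvexOn ℝ univ φ)
    (hφc : Continuous φ) (hf : Continuous f) (a : ℝ) :
    φ (∫ t in a..a + 1, f t) ≤ ∫ t in a..a + 1, φ (f t) := by
  have hvol : volume (Ioc a (a + 1)) = 1 := by simp
  have h := hφ.map_set_average_le (μ := volume) (t := Ioc a (a + 1)) hφc.continuousOn
    isClosed_univ (by simp [hvol]) (by simp [hvol]) (ae_of_all _ fun _ => mem_univ _)
    hf.integrableOn_Ioc (hφc.comp hf).integrableOn_Ioc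
  simpa [setAverage_eq, hvol, integral_of_le] using h

lemma integral_sub_sq_centered (c μ : ℝ) :
    ∫ t in (μ - 1/2)..(μ + 1/2), (c - t ^ 2) = c - 1/12 - μ ^ 2 := by
  simp [intervalIntegral.integral_sub, integral_pow]
  ring

lemma ConvexOn.map_sub_sq_le_integral {φ : ℝ → ℝ} (hφ : ConvexOn ℝ univ φ)
    (hφc : Continuous φ) (c μ : ℝ) :
    φ (c - 1/12 - μ ^ 2) ≤ ∫ t in (μ - 1/2)..(μ + 1/2), φ (c - t ^ 2) := by
  have h := hφ.map_intervalIntegral_le hφc (f := fun t => c - t ^ 2) (by fun_prop) (μ - 1/2)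
  rwa [show μ - 1/2 + 1 = μ + 1/2 by ring, integral_sub_sq_centered] at h

lemma sum_integral_centered_le_integral {f : ℝ → ℝ} (hf : Integrable f) (hf0 : 0 ≤ f)
    (S : Finset ℤ) : ∑ n ∈ S, ∫ t in (n - 1/2 : ℝ)..(n + 1/2), f t ≤ ∫ t, f t := by
  refine le_of_eq_of_le (Finset.sum_congr rfl fun n _ => ?_)
    (sum_le_hasSum S (fun n _ => ?_) (hf.hasSum_intervalIntegral (-1/2)))
  · congr 1 <;> ring
  · exact integral_nonneg (by linarith) fun t _ => hf0 t

lemma posPart_sub_sq_eq_zero {c t : ℝ} (ht : t ∉ Icc (-√c) √c) : (c - t ^ 2)⁺ = 0 := by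
  rw [posPart_eq_zero, sub_nonpos]
  by_contra! h
  exact ht (abs_le.1 ((sqrt_sq_eq_abs t).symm.trans_le (sqrt_le_sqrt h.le)))

lemma integrable_posPart_sub_sq_rpow {p : ℝ} (hp : 0 < p) (c : ℝ) :
    Integrable fun t : ℝ => (c - t ^ 2)⁺ ^ p :=
  ((continuous_posPart_rpow hp.le).comp (by fun_prop : Continuous fun t : ℝ => c - t ^ 2))
    |>.integrable_of_hasCompactSupport <|
      HasCompactSupport.intro (isCompact_Icc (a := -√c) (b := √c)) fun t ht => by
        simp [posPart_sub_sq_eq_zero ht, zero_rpow hp.ne']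

lemma sum_posPart_sub_sq_rpow_le_integral {p : ℝ} (hp : 1 ≤ p) (c : ℝ) (S : Finset ℤ) :
    ∑ n ∈ S, (c - (n : ℝ) ^ 2)⁺ ^ p ≤ ∫ t, (c + 1/12 - t ^ 2)⁺ ^ p := by
  have hjensen (n : ℤ) : (c - (n : ℝ) ^ 2)⁺ ^ p
      ≤ ∫ t in (n - 1/2 : ℝ)..(n + 1/2), (c + 1/12 - t ^ 2)⁺ ^ p := by
    have h := (convexOn_posPart_rpow hp).map_sub_sq_le_integral
      (continuous_posPart_rpow (by linarith)) (c + 1/12) n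
    rwa [add_sub_cancel_right] at h
  exact (Finset.sum_le_sum fun n _ => hjensen n).trans <|
    sum_integral_centered_le_integral (integrable_posPart_sub_sq_rpow (by linarith) _)
      (fun t => rpow_nonneg (posPart_nonneg _) p) S

lemma integral_posPart_sub_sq_rpow {p : ℝ} (hp : 0 < p) (c : ℝ) :
    ∫ t, (c - t ^ 2)⁺ ^ p = c⁺ ^ (p + 1/2) * ∫ θ in -(π/2)..π/2, cos θ ^ (2 * p + 1) := by
  rcases le_or_gt c 0 with hc | hc
  · have h0 (t : ℝ) : (c - t ^ 2)⁺ = 0 := posPart_of_nonpos (by nlinarith [sq_nonneg t])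
    simp only [h0, posPart_of_nonpos hc, zero_rpow hp.ne', zero_rpow (by linarith : p + 1/2 ≠ 0),
      integral_zero, zero_mul]
  set s := √c
  have hs : s ^ 2 = c := sq_sqrt hc.le
  have hsubst : ∀ θ ∈ uIcc (-(π/2)) (π/2),
      (c - (s * sin θ) ^ 2)⁺ ^ p * (s * cos θ) = c ^ (p + 1/2) * cos θ ^ (2 * p + 1) := by
    intro θ hθ
    rw [uIcc_of_le (by linarith [pi_pos])] at hθ
    have hcos : 0 ≤ cos θ := cos_nonneg_of_mem_Icc hθ
    have hscos : 0 ≤ s * cos θ := mul_nonneg (sqrt_nonneg c) hcos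
    have hcirc : c - (s * sin θ) ^ 2 = (s * cos θ) ^ 2 := by
      linear_combination -hs - s ^ 2 * sin_sq_add_cos_sq θ
    rw [hcirc, posPart_of_nonneg (sq_nonneg _), ← Nat.cast_ofNat, ← rpow_natCast_mul hscos,
      ← rpow_add_one' hscos (by push_cast; linarith), mul_rpow (sqrt_nonneg c) hcos,
      sqrt_eq_rpow, ← rpow_mul hc.le]
    push_cast
    ring_nf
  calc ∫ t, (c - t ^ 2)⁺ ^ p
      = ∫ t in -s..s, (c - t ^ 2)⁺ ^ p := by
        rw [integral_of_le (by linarith [sqrt_nonneg c]), ← integral_Icc_eq_integral_Ioc,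
          setIntegral_eq_integral_of_forall_compl_eq_zero]
        intro t ht
        simp [posPart_sub_sq_eq_zero ht, zero_rpow hp.ne']
    _ = ∫ θ in -(π/2)..π/2, (c - (s * sin θ) ^ 2)⁺ ^ p * (s * cos θ) := by
        have h := integral_comp_mul_deriv (f := fun θ => s * sin θ) (f' := fun θ => s * cos θ)
          (g := fun t => (c - t ^ 2)⁺ ^ p) (a := -(π/2)) (b := π/2)
          (fun θ _ => (hasDerivAt_sin θ).const_mul s) (by fun_prop)
          ((continuous_posPart_rpow hp.le).comp (by fun_prop))
        simp only [Function.comp_apply, sin_neg, sin_pi_div_two, mul_one, mul_neg] at h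
        exact h.symm
    _ = c⁺ ^ (p + 1/2) * ∫ θ in -(π/2)..π/2, cos θ ^ (2 * p + 1) := by
        rw [integral_congr hsubst, intervalIntegral.integral_const_mul, posPart_of_nonneg hc.le]

lemma integral_cos_rpow_natCast (n : ℕ) :
    ∫ θ in -(π/2)..π/2, cos θ ^ (n : ℝ) = ∫ θ in 0..π, sin θ ^ n := by
  have h := integral_comp_add_right (fun θ => sin θ ^ n) (π/2) (a := -(π/2)) (b := π/2)
  simp only [sin_add_pi_div_two, neg_add_cancel, add_halves] at h
  simp only [rpow_natCast, h]

lemma integral_posPart_sub_sq_sq (c : ℝ) :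
    ∫ t, (c - t ^ 2)⁺ ^ (2 : ℝ) = 16/15 * c⁺ ^ (5/2 : ℝ) := by
  rw [integral_posPart_sub_sq_rpow two_pos, show (2 * 2 + 1 : ℝ) = (2 * 2 + 1 : ℕ) by norm_num,
    integral_cos_rpow_natCast, integral_sin_pow_odd]
  norm_num [Finset.prod_range_succ]
  ring_nf

lemma integral_posPart_sub_sq_rpow_five_halves (c : ℝ) :
    ∫ t, (c - t ^ 2)⁺ ^ (5/2 : ℝ) = 5 * π / 16 * c⁺ ^ 3 := by
  rw [integral_posPart_sub_sq_rpow (by norm_num),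
    show (2 * (5/2) + 1 : ℝ) = (2 * 3 : ℕ) by norm_num,
    integral_cos_rpow_natCast, integral_sin_pow_even, show (5/2 + 1/2 : ℝ) = (3 : ℕ) by norm_num,
    rpow_natCast]
  norm_num [Finset.prod_range_succ]
  ring

lemma sum_sum_posPart_sub_sq_sq_le (x : ℝ) (S : Finset ℤ) :
    ∑ m ∈ S, ∑ n ∈ S, (x - ((m : ℝ) ^ 2 + (n : ℝ) ^ 2))⁺ ^ (2 : ℝ) ≤ π / 3 * (x + 1/6)⁺ ^ 3 := by
  have hinner (m : ℤ) : ∑ n ∈ S, (x - ((m : ℝ) ^ 2 + (n : ℝ) ^ 2))⁺ ^ (2 : ℝ)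
      ≤ 16/15 * (x + 1/12 - (m : ℝ) ^ 2)⁺ ^ (5/2 : ℝ) := by
    have h := sum_posPart_sub_sq_rpow_le_integral one_le_two (x - (m : ℝ) ^ 2) S
    simp only [sub_sub, integral_posPart_sub_sq_sq] at h
    convert h using 4; ring
  have houter := sum_posPart_sub_sq_rpow_le_integral (by norm_num : (1 : ℝ) ≤ 5/2) (x + 1/12) S
  rw [integral_posPart_sub_sq_rpow_five_halves, show x + 1/12 + 1/12 = x + 1/6 by ring] at houter
  calc _ ≤ ∑ m ∈ S, 16/15 * (x + 1/12 - (m : ℝ) ^ 2)⁺ ^ (5/2 : ℝ) :=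
        Finset.sum_le_sum fun m _ => hinner m
    _ ≤ 16/15 * (5 * π / 16 * (x + 1/6)⁺ ^ 3) := by
        rw [← Finset.mul_sum]
        gcongr
    _ = π / 3 * (x + 1/6)⁺ ^ 3 := by ring

lemma rieszMean2_eq_sum (x : ℝ) {S : Finset ℤ} (hS : ∀ m : ℤ, (m : ℝ) ^ 2 ≤ x → m ∈ S) :
    rieszMean2 x = ∑ m ∈ S, ∑ n ∈ S, (x - ((m : ℝ) ^ 2 + (n : ℝ) ^ 2))⁺ ^ (2 : ℝ) := by
  set f : ℤ × ℤ → ℝ := fun p => (x - ((p.1 : ℝ) ^ 2 + (p.2 : ℝ) ^ 2))⁺ ^ (2 : ℝ)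
  have hsupp : Function.support f ⊆ {p | (p.1 : ℝ) ^ 2 + (p.2 : ℝ) ^ 2 ≤ x} := by
    refine Function.support_subset_iff'.2 fun p hp => ?_
    have hpx : x - ((p.1 : ℝ) ^ 2 + (p.2 : ℝ) ^ 2) ≤ 0 := sub_nonpos.2 (not_le.1 hp).le
    simp [f, posPart_of_nonpos hpx]
  have hzero : ∀ p ∉ S ×ˢ S, f p = 0 := by
    intro p hp
    by_contra h
    have hpx : (p.1 : ℝ) ^ 2 + (p.2 : ℝ) ^ 2 ≤ x := hsupp h
    exact hp (Finset.mem_product.2 ⟨hS _ (by nlinarith [sq_nonneg (p.2 : ℝ)]),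
      hS _ (by nlinarith [sq_nonneg (p.1 : ℝ)])⟩)
  have hf : rieszMean2 x = ∑' p : {p : ℤ × ℤ // (p.1 : ℝ) ^ 2 + (p.2 : ℝ) ^ 2 ≤ x}, f p :=
    tsum_congr fun p => by simp only [f, rpow_two, posPart_of_nonneg (sub_nonneg.2 p.2)]
  rw [hf]
  refine (tsum_subtype_eq_of_support_subset hsupp).trans ?_
  rw [tsum_eq_sum hzero, Finset.sum_product]

lemma mem_Icc_ceil_sqrt_of_sq_le {x : ℝ} {m : ℤ} (hm : (m : ℝ) ^ 2 ≤ x) :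
    m ∈ Finset.Icc (-(⌈√x⌉₊ : ℤ)) ⌈√x⌉₊ := by
  have h : |(m : ℝ)| ≤ ((⌈√x⌉₊ : ℤ) : ℝ) := by
    push_cast
    exact (abs_le_sqrt hm).trans (Nat.le_ceil _)
  exact Finset.mem_Icc.2 (abs_le.1 (by exact_mod_cast h))

/-- for all `x ≥ 0`, `R₂(x) ≤ (π/3)(x + 1/2)³`. -/
theorem stmt_13 (x : ℝ) (hx : 0 ≤ x) :
    rieszMean2 x ≤ (π / 3) * (x + 1/2)^3 := by
  rw [rieszMean2_eq_sum x fun m => mem_Icc_ceil_sqrt_of_sq_le]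
  calc _ ≤ π / 3 * (x + 1/6)⁺ ^ 3 := sum_sum_posPart_sub_sq_sq_le x _
    _ = π / 3 * (x + 1/6) ^ 3 := by rw [posPart_of_nonneg (by linarith)]
    _ ≤ π / 3 * (x + 1/2) ^ 3 := by gcongr; linarith
end

section
/- For every real $\beta\ge1$ (i.e. $\beta=\gamma/\alpha$), $\sum_{j\in\mathbb{Z}}\max(\beta-j^2,0)^2\le\tfrac{16}{15}\big(\beta+\tfrac14\big)^{5/2}$. -/
/-!
With `c = β + 1/4`, the midpoint rule is exact up to a constant for `(c - x²)²`:
`∫_{j-1/2}^{j+1/2} (c - x²)² dx = (β - j²)² + β/3 + 1/30`.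
Summing over `|j| ≤ N = ⌊√β⌋` (exactly the `j` with a nonzero term) telescopes, so the sum is
`∫_{-m}^{m} (c - x²)² dx - 2m (c/3 - 1/20)` with `m = N + 1/2 ≤ √c + 1/2`, whereas
`(16/15) c^{5/2} = ∫_{-√c}^{√c} (c - x²)² dx`. The difference of the two integrals is explicit,
and what remains is a polynomial inequality in `r = √c` and `m`.
-/

open Finset

noncomputable def sqSubSqAntideriv (c x : ℝ) : ℝ := c ^ 2 * x - 2 / 3 * c * x ^ 3 + x ^ 5 / 5

lemma Int.sum_Ico_sub {M : Type*} [AddCommGroup M] (g : ℤ → M) {a b : ℤ} (hab : a ≤ b) :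
    ∑ j ∈ Ico a b, (g (j + 1) - g j) = g b - g a := by
  induction b, hab using Int.leInduction with
  | base => simp
  | succ b hab ih =>
    rw [← insert_Ico_right_eq_Ico_add_one_of_not_isMax hab (not_isMax b), sum_insert (by simp), ih]
    abel

lemma sq_sub_sq_eq_antideriv_sub (β j : ℝ) :
    (β - j ^ 2) ^ 2 = sqSubSqAntideriv (β + 1 / 4) (j + 1 / 2)
      - sqSubSqAntideriv (β + 1 / 4) (j - 1 / 2) - (β / 3 + 1 / 30) := by
  unfold sqSubSqAntideriv
  ring

lemma sum_Icc_neg_sq_sub_sq (β : ℝ) {N : ℤ} (hN : 0 ≤ N) :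
    ∑ j ∈ Icc (-N) N, (β - (j : ℝ) ^ 2) ^ 2 = sqSubSqAntideriv (β + 1 / 4) (N + 1 / 2)
      - sqSubSqAntideriv (β + 1 / 4) (-(N + 1 / 2)) - (2 * N + 1) * (β / 3 + 1 / 30) := by
  let g : ℤ → ℝ := fun j ↦ sqSubSqAntideriv (β + 1 / 4) (j - 1 / 2)
  have hcard : ((#(Icc (-N) N) : ℕ) : ℝ) = 2 * N + 1 := by
    rw [Int.card_Icc, ← Int.cast_natCast, Int.toNat_of_nonneg (by omega)]
    push_cast
    ring
  calc ∑ j ∈ Icc (-N) N, (β - (j : ℝ) ^ 2) ^ 2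
      = ∑ j ∈ Icc (-N) N, ((g (j + 1) - g j) - (β / 3 + 1 / 30)) := by
        refine sum_congr rfl fun j _ ↦ ?_
        simp only [g, sq_sub_sq_eq_antideriv_sub, Int.cast_add, Int.cast_one]
        ring_nf
    _ = g (N + 1) - g (-N) - (2 * N + 1) * (β / 3 + 1 / 30) := by
        rw [sum_sub_distrib, ← Ico_add_one_right_eq_Icc, Int.sum_Ico_sub g (by omega),
          Ico_add_one_right_eq_Icc, sum_const, nsmul_eq_mul, hcard]
    _ = _ := by
        simp only [g, Int.cast_add, Int.cast_one, Int.cast_neg]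
        ring_nf

lemma int_sq_le_iff_mem_Icc_floor_sqrt {β : ℝ} (hβ : 0 ≤ β) (j : ℤ) :
    (j : ℝ) ^ 2 ≤ β ↔ j ∈ Icc (-⌊√β⌋) ⌊√β⌋ := by
  rw [Real.sq_le hβ, mem_Icc, neg_le, neg_le (a := ⌊√β⌋), Int.le_floor, Int.le_floor,
    Int.cast_neg]

lemma tsum_max_sub_sq_sq_eq_sum {β : ℝ} (hβ : 0 ≤ β) :
    ∑' j : ℤ, max (β - (j : ℝ) ^ 2) 0 ^ 2 = ∑ j ∈ Icc (-⌊√β⌋) ⌊√β⌋, (β - (j : ℝ) ^ 2) ^ 2 := by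
  rw [tsum_eq_sum (s := Icc (-⌊√β⌋) ⌊√β⌋)]
  · refine sum_congr rfl fun j hj ↦ ?_
    rw [max_eq_left (sub_nonneg.2 ((int_sq_le_iff_mem_Icc_floor_sqrt hβ j).2 hj))]
  · intro j hj
    rw [← int_sq_le_iff_mem_Icc_floor_sqrt hβ, not_le] at hj
    simp [hj.le]

/-- The first term is `∫_m^r (r² - x²)² dx`; when `m > r` it is a small negative cubic in
`m - r ≤ 1/2`, absorbed by the second. -/
lemma midpoint_defect_nonneg {r m : ℝ} (hr : 1 ≤ r) (hm : 0 ≤ m) (hmr : m ≤ r + 1 / 2) :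
    0 ≤ (r - m) ^ 3 * (8 * r ^ 2 + 9 * r * m + 3 * m ^ 2) / 15 + m * (r ^ 2 / 3 - 1 / 20) := by
  rcases le_or_gt m r with hle | hgt
  · have : 0 ≤ r ^ 2 / 3 - 1 / 20 := by nlinarith
    positivity
  · obtain ⟨d, rfl⟩ : ∃ d, m = r + d := ⟨m - r, by ring⟩
    have hd : 0 < d := by linarith
    have hd2 : d ^ 2 ≤ 1 / 4 := by nlinarith
    nlinarith [mul_le_mul_of_nonneg_left hd2 (by positivity : 0 ≤ d * r ^ 2),
      mul_le_mul_of_nonneg_left hd2 (by positivity : 0 ≤ d ^ 2 * r),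
      mul_le_mul_of_nonneg_left hd2 (by positivity : 0 ≤ d ^ 3), mul_pos hd hd]

lemma antideriv_midpoint_sum_le {r m : ℝ} (hr : 1 ≤ r) (hm : 0 ≤ m) (hmr : m ≤ r + 1 / 2) :
    sqSubSqAntideriv (r ^ 2) m - sqSubSqAntideriv (r ^ 2) (-m) - 2 * m * (r ^ 2 / 3 - 1 / 20)
      ≤ 16 / 15 * r ^ 5 := by
  have hdiff : 16 / 15 * r ^ 5 - (sqSubSqAntideriv (r ^ 2) m - sqSubSqAntideriv (r ^ 2) (-m)
      - 2 * m * (r ^ 2 / 3 - 1 / 20)) = 2 * ((r - m) ^ 3 * (8 * r ^ 2 + 9 * r * m + 3 * m ^ 2) / 15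
        + m * (r ^ 2 / 3 - 1 / 20)) := by
    unfold sqSubSqAntideriv
    ring
  linarith [midpoint_defect_nonneg hr hm hmr]

/-- for every real `β ≥ 1`,
`∑_{j ∈ ℤ} max(β - j², 0)² ≤ (16/15)(β + 1/4)^{5/2}`. -/
theorem stmt_14 (β : ℝ) (hβ : 1 ≤ β) :
    (∑' j : ℤ, max (β - (j : ℝ)^2) 0 ^ 2) ≤ (16/15) * (β + 1/4) ^ ((5 : ℝ)/2) := by
  have hβ0 : 0 ≤ β := by linarith
  set N := ⌊√β⌋
  have hN0 : 0 ≤ N := Int.floor_nonneg.2 (Real.sqrt_nonneg β)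
  set r := √(β + 1 / 4)
  have hr : r ^ 2 = β + 1 / 4 := Real.sq_sqrt (by linarith)
  have hr1 : 1 ≤ r := Real.one_le_sqrt.2 (by linarith)
  have hNr : (N : ℝ) ≤ r := (Int.floor_le _).trans (Real.sqrt_le_sqrt (by linarith))
  have key := antideriv_midpoint_sum_le hr1 (m := N + 1 / 2) (by positivity) (by linarith)
  rw [hr] at key
  rw [tsum_max_sub_sq_sq_eq_sum hβ0, sum_Icc_neg_sq_sub_sq β hN0,
    Real.rpow_div_two_eq_sqrt _ (by linarith), Real.rpow_ofNat]
  linarith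
end
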